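/- Let n ≥ 1 and d_1, …, d_n ≥ 2 be integers and let D = d_1⋯d_n. If {Ψ_{j1}, …, Ψ_{jD}}, j = 1, …, t, are mutually unbiased orthonormal bases of ℂ^{d_1} ⊗ … ⊗ ℂ^{d_n} ≅ ℂ^D such that every Ψ_{ji} is a product vector, then t ≤ (min_{1 ≤ j ≤ n} d_j) + 1. -/

import Mathlib

open Matrix Finset

/-- A vector of ℂ^{d₁} ⊗ ⋯ ⊗ ℂ^{dₙ} is a product vector. -/
def IsProductVectorMulti {n : ℕ} {d : Fin n → ℕ} (w : ((j : Fin n) → Fin (d j)) → ℂ) : Prop :=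
  ∃ x : (j : Fin n) → Fin (d j) → ℂ, ∀ i, w i = ∏ j, x j (i j)

/-!
Write every basis vector as a tensor product of unit vectors and fix a tensor factor `j`, of
dimension `m = d_j`. Testing an orthonormal product basis against `u ⊗ e_c`, with `e_c` running
over the standard basis of the other factors, shows that its `j`-th factors form a tight frame:
`∑_i |⟨x_ij, u⟩|² = (D / m) ‖u‖²`. For vectors of two mutually unbiased bases, the numbers
`g_j = d_j |⟨x_j, y_j⟩|²` have product `D · (1 / D) = 1`, and by the frame identity their sums
over one basis are all equal to `D`; AM–GM forces every `g_j = 1`, so the `j`-th factors are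
themselves mutually unbiased in `ℂ^m`, and those of one basis span `ℂ^m`. Finally, in the
Hilbert–Schmidt space of `m × m` matrices the traceless parts `|x⟩⟨x| - I / m` of the factors
of one basis span a space of dimension `≥ m - 1`; these spaces are pairwise orthogonal and
orthogonal to `I`, so `t (m - 1) + 1 ≤ m²`, i.e. `t ≤ m + 1`.
-/

open Module Submodule
open scoped InnerProductSpace ComplexConjugate Function

lemma Real.eq_one_of_prod_eq_one_of_sum_eq_card {ι N : Type*} [Fintype ι] [Fintype N]
    {g : ι → N → ℝ} (hpos : ∀ i j, 0 < g i j) (hprod : ∀ i, ∏ j, g i j = 1)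
    (hsum : ∀ j, ∑ i, g i j = Fintype.card ι) (i : ι) (j : N) : g i j = 1 := by
  have hterm (i j) : 0 ≤ g i j - 1 - Real.log (g i j) := by
    linarith [Real.log_le_sub_one_of_pos (hpos i j)]
  have htotal : ∑ i, ∑ j, (g i j - 1 - Real.log (g i j)) = 0 := by
    simp only [sum_sub_distrib, ← Real.log_prod fun j _ => (hpos _ j).ne', hprod, Real.log_one]
    rw [sum_comm]
    simp [hsum, mul_comm]
  have hij : g i j - 1 - Real.log (g i j) = 0 := by
    rw [sum_eq_zero_iff_of_nonneg fun i _ => sum_nonneg fun j _ => hterm i j] at htotal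
    exact (sum_eq_zero_iff_of_nonneg fun j _ => hterm i j).1 (htotal i (mem_univ i)) j (mem_univ j)
  by_contra h
  linarith [Real.log_lt_sub_one_of_pos (hpos i j) h]

lemma sum_finrank_le_finrank_of_pairwise_isOrtho {𝕜 E ι : Type*} [RCLike 𝕜]
    [NormedAddCommGroup E] [InnerProductSpace 𝕜 E] [FiniteDimensional 𝕜 E] [Fintype ι]
    {W : ι → Submodule 𝕜 E} (hW : Pairwise ((· ⟂ ·) on W)) :
    ∑ i, finrank 𝕜 (W i) ≤ finrank 𝕜 E := by
  have hon := (orthogonalFamily_iff_pairwise.2 hW).orthonormal_sigma_orthonormal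
    fun i => (stdOrthonormalBasis 𝕜 (W i)).orthonormal
  simpa using hon.linearIndependent.fintype_card_le_finrank

lemma card_eq_card_of_orthonormalBasis {ι I : Type*} [Fintype ι] [Fintype I]
    (b : OrthonormalBasis ι ℂ (EuclideanSpace ℂ I)) : Fintype.card ι = Fintype.card I := by
  rw [← Module.finrank_eq_card_basis b.toBasis, finrank_euclideanSpace]

namespace HilbertSchmidt

variable {κ : Type*} [Fintype κ]

/-- The matrix `z z*`, flattened so that the Hilbert–Schmidt inner product becomes the
Euclidean one. -/
noncomputable def outer (z : EuclideanSpace ℂ κ) : EuclideanSpace ℂ (κ × κ) :=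
  WithLp.toLp 2 fun pq => z pq.1 * conj (z pq.2)

noncomputable def contract (w : EuclideanSpace ℂ κ) :
    EuclideanSpace ℂ (κ × κ) →ₗ[ℂ] EuclideanSpace ℂ κ where
  toFun M := WithLp.toLp 2 fun p => ∑ q, M (p, q) * w q
  map_add' M M' := by ext p; simp [add_mul, sum_add_distrib]
  map_smul' c M := by ext p; simp [mul_sum, mul_assoc]

lemma contract_outer (w z : EuclideanSpace ℂ κ) : contract w (outer z) = ⟪z, w⟫_ℂ • z := by
  ext p
  simp [contract, outer, PiLp.inner_apply, mul_sum, mul_comm, mul_left_comm]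

lemma linearIndependent_outer_comp {ι : Type*} {v : ι → EuclideanSpace ℂ κ}
    (hv : LinearIndependent ℂ v) : LinearIndependent ℂ (outer ∘ v) := by
  refine linearIndependent_iff'.2 fun s g hg i hi => ?_
  have hcontract := congrArg (contract (v i)) hg
  simp only [Function.comp_apply, map_sum, map_smul, contract_outer, smul_smul,
    map_zero] at hcontract
  have hgi : g i * ⟪v i, v i⟫_ℂ = 0 := linearIndependent_iff'.1 hv s _ hcontract i hi
  exact (mul_eq_zero.1 hgi).resolve_right (inner_self_ne_zero.2 (hv.ne_zero i))

lemma card_le_finrank_span_outer {ι : Type*} {y : ι → EuclideanSpace ℂ κ}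
    (hy : span ℂ (Set.range y) = ⊤) :
    Fintype.card κ ≤ finrank ℂ (span ℂ (Set.range (outer ∘ y))) := by
  obtain ⟨ι', a, -, hspan, hli⟩ := exists_linearIndependent' ℂ y
  have : Finite ι' := hli.finite
  have : Fintype ι' := Fintype.ofFinite ι'
  calc Fintype.card κ = finrank ℂ (span ℂ (Set.range (y ∘ a))) := by
        rw [hspan, hy, finrank_top, finrank_euclideanSpace]
    _ = finrank ℂ (span ℂ (Set.range (outer ∘ y ∘ a))) := by
        rw [finrank_span_eq_card hli, finrank_span_eq_card (linearIndependent_outer_comp hli)]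
    _ ≤ finrank ℂ (span ℂ (Set.range (outer ∘ y))) :=
        Submodule.finrank_mono (span_mono (Set.range_comp_subset_range a (outer ∘ y)))

lemma inner_outer_outer (z w : EuclideanSpace ℂ κ) :
    ⟪outer z, outer w⟫_ℂ = (‖⟪z, w⟫_ℂ‖ ^ 2 : ℝ) := by
  rw [Complex.ofReal_pow, ← Complex.mul_conj']
  simp only [outer, PiLp.inner_apply, RCLike.inner_apply, Fintype.sum_prod_type, map_sum,
    sum_mul_sum, map_mul, Complex.conj_conj]
  exact sum_congr rfl fun p _ => sum_congr rfl fun q _ => by ring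

variable [DecidableEq κ]

noncomputable def diagOne : EuclideanSpace ℂ (κ × κ) :=
  WithLp.toLp 2 fun pq => if pq.1 = pq.2 then 1 else 0

lemma inner_outer_diagOne (z : EuclideanSpace ℂ κ) : ⟪outer z, diagOne⟫_ℂ = (‖z‖ ^ 2 : ℝ) := by
  simp only [outer, diagOne, PiLp.inner_apply, RCLike.inner_apply, Fintype.sum_prod_type,
    EuclideanSpace.norm_sq_eq, ite_mul, one_mul, zero_mul, sum_ite_eq, mem_univ, if_true]
  push_cast
  exact sum_congr rfl fun p _ => by rw [← Complex.mul_conj', map_mul, Complex.conj_conj, mul_comm]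

lemma inner_diagOne_outer (z : EuclideanSpace ℂ κ) : ⟪diagOne, outer z⟫_ℂ = (‖z‖ ^ 2 : ℝ) := by
  rw [← inner_conj_symm, inner_outer_diagOne, Complex.conj_ofReal]

lemma inner_diagOne_diagOne :
    ⟪(diagOne : EuclideanSpace ℂ (κ × κ)), diagOne⟫_ℂ = Fintype.card κ := by
  simp only [diagOne, PiLp.inner_apply, RCLike.inner_apply, Fintype.sum_prod_type]
  simp [apply_ite]

noncomputable def tracelessOuter (z : EuclideanSpace ℂ κ) : EuclideanSpace ℂ (κ × κ) :=
  outer z - (Fintype.card κ : ℂ)⁻¹ • diagOne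

lemma outer_mem_sup_span_diagOne {z : EuclideanSpace ℂ κ}
    {W : Submodule ℂ (EuclideanSpace ℂ (κ × κ))} (hz : tracelessOuter z ∈ W) :
    outer z ∈ W ⊔ ℂ ∙ diagOne := by
  rw [← sub_add_cancel (outer z) ((Fintype.card κ : ℂ)⁻¹ • diagOne)]
  exact add_mem (mem_sup_left hz) (mem_sup_right (smul_mem _ _ (mem_span_singleton_self _)))

variable [Nonempty κ]

lemma diagOne_ne_zero : (diagOne : EuclideanSpace ℂ (κ × κ)) ≠ 0 := fun h => by
  simpa [h] using (inner_diagOne_diagOne (κ := κ)).symm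

lemma card_le_finrank_span_tracelessOuter_add_one {ι : Type*} {y : ι → EuclideanSpace ℂ κ}
    (hy : span ℂ (Set.range y) = ⊤) :
    Fintype.card κ ≤ finrank ℂ (span ℂ (Set.range (tracelessOuter ∘ y))) + 1 := by
  set W := span ℂ (Set.range (tracelessOuter ∘ y))
  calc Fintype.card κ ≤ finrank ℂ (span ℂ (Set.range (outer ∘ y))) := card_le_finrank_span_outer hy
    _ ≤ finrank ℂ ↥(W ⊔ ℂ ∙ diagOne) := by
        refine Submodule.finrank_mono (span_le.2 ?_)
        rintro _ ⟨i, rfl⟩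
        exact outer_mem_sup_span_diagOne (subset_span ⟨i, rfl⟩)
    _ ≤ finrank ℂ W + finrank ℂ (ℂ ∙ diagOne) := finrank_add_le_finrank_add_finrank _ _
    _ = finrank ℂ W + 1 := by rw [finrank_span_singleton diagOne_ne_zero]

lemma inner_tracelessOuter_diagOne {z : EuclideanSpace ℂ κ} (hz : ‖z‖ = 1) :
    ⟪tracelessOuter z, diagOne⟫_ℂ = 0 := by
  have hm : (Fintype.card κ : ℂ) ≠ 0 := Nat.cast_ne_zero.2 Fintype.card_ne_zero
  rw [tracelessOuter, inner_sub_left, inner_smul_left, inner_outer_diagOne, inner_diagOne_diagOne,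
    hz, map_inv₀, map_natCast, inv_mul_cancel₀ hm]
  simp

lemma inner_tracelessOuter_eq_zero {z w : EuclideanSpace ℂ κ} (hz : ‖z‖ = 1) (hw : ‖w‖ = 1)
    (hzw : ‖⟪z, w⟫_ℂ‖ ^ 2 = (Fintype.card κ : ℝ)⁻¹) :
    ⟪tracelessOuter z, tracelessOuter w⟫_ℂ = 0 := by
  nth_rw 2 [tracelessOuter]
  rw [inner_sub_right, inner_smul_right, inner_tracelessOuter_diagOne hz, tracelessOuter,
    inner_sub_left, inner_smul_left, inner_outer_outer, inner_diagOne_outer, hzw,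
    hw, map_inv₀, map_natCast]
  push_cast
  ring

end HilbertSchmidt

open HilbertSchmidt in
theorem card_le_card_add_one_of_unbiased {κ α ι : Type*} [Fintype κ] [DecidableEq κ]
    [Fintype α] (hκ : 1 < Fintype.card κ) (y : α → ι → EuclideanSpace ℂ κ)
    (hy : ∀ a i, ‖y a i‖ = 1) (hspan : ∀ a, span ℂ (Set.range (y a)) = ⊤)
    (hunb : ∀ a b, a ≠ b → ∀ i i', ‖⟪y a i, y b i'⟫_ℂ‖ ^ 2 = (Fintype.card κ : ℝ)⁻¹) :
    Fintype.card α ≤ Fintype.card κ + 1 := by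
  have : Nonempty κ := Fintype.card_pos_iff.1 (by omega)
  set W : α → Submodule ℂ (EuclideanSpace ℂ (κ × κ)) :=
    fun a => span ℂ (Set.range (tracelessOuter ∘ y a))
  set V : Option α → Submodule ℂ (EuclideanSpace ℂ (κ × κ)) := fun o => o.elim (ℂ ∙ diagOne) W
  have hortho : Pairwise ((· ⟂ ·) on V) := by
    rintro (_ | a) (_ | b) hab
    · exact absurd rfl hab
    · exact isOrtho_span.2 fun u hu v ⟨i, hv⟩ => by
        rw [Set.mem_singleton_iff.1 hu, ← hv, inner_eq_zero_symm]
        exact inner_tracelessOuter_diagOne (hy b i)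
    · exact isOrtho_span.2 fun u ⟨i, hu⟩ v hv => by
        rw [Set.mem_singleton_iff.1 hv, ← hu]
        exact inner_tracelessOuter_diagOne (hy a i)
    · exact isOrtho_span.2 fun u ⟨i, hu⟩ v ⟨i', hv⟩ => by
        rw [← hu, ← hv]
        exact inner_tracelessOuter_eq_zero (hy a i) (hy b i')
          (hunb a b (fun h => hab (congrArg some h)) i i')
  have hsum := sum_finrank_le_finrank_of_pairwise_isOrtho hortho
  rw [Fintype.sum_option, finrank_euclideanSpace] at hsum
  change finrank ℂ (ℂ ∙ diagOne) + ∑ a, finrank ℂ (W a) ≤ Fintype.card (κ × κ) at hsum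
  rw [finrank_span_singleton diagOne_ne_zero, Fintype.card_prod] at hsum
  have hdim := sum_le_sum fun a (_ : a ∈ univ) =>
    card_le_finrank_span_tracelessOuter_add_one (hspan a)
  rw [sum_const, sum_add_distrib, sum_const, card_univ, smul_eq_mul, smul_eq_mul, mul_one] at hdim
  nlinarith

namespace ProductVector

variable {N : Type*} [Fintype N] {κ : N → Type*}

noncomputable def tprod (x : ∀ j, EuclideanSpace ℂ (κ j)) : EuclideanSpace ℂ (∀ j, κ j) :=
  WithLp.toLp 2 fun i => ∏ j, x j (i j)

@[simp] lemma tprod_apply (x : ∀ j, EuclideanSpace ℂ (κ j)) (i : ∀ j, κ j) :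
    tprod x i = ∏ j, x j (i j) := rfl

lemma tprod_smul (c : N → ℂ) (x : ∀ j, EuclideanSpace ℂ (κ j)) :
    tprod (fun j => c j • x j) = (∏ j, c j) • tprod x := by
  ext i
  simp [prod_mul_distrib]

lemma exists_tprod_eq_of_isProductVectorMulti {n : ℕ} {d : Fin n → ℕ}
    {w : ((j : Fin n) → Fin (d j)) → ℂ} (hw : IsProductVectorMulti w) :
    ∃ x : ∀ j, EuclideanSpace ℂ (Fin (d j)), WithLp.toLp 2 w = tprod x := by
  obtain ⟨x, hx⟩ := hw
  exact ⟨fun j => WithLp.toLp 2 (x j), by ext i; simp [hx]⟩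

variable [DecidableEq N] [∀ j, Fintype (κ j)]

lemma inner_tprod (x y : ∀ j, EuclideanSpace ℂ (κ j)) :
    ⟪tprod x, tprod y⟫_ℂ = ∏ j, ⟪x j, y j⟫_ℂ := by
  simp only [PiLp.inner_apply, tprod_apply, RCLike.inner_apply, map_prod, ← prod_mul_distrib]
  exact (Fintype.prod_sum fun j k => y j k * conj (x j k)).symm

lemma norm_tprod (x : ∀ j, EuclideanSpace ℂ (κ j)) : ‖tprod x‖ = ∏ j, ‖x j‖ := by
  have h : ((‖tprod x‖ ^ 2 : ℝ) : ℂ) = ((∏ j, ‖x j‖) ^ 2 : ℝ) := by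
    simpa [← prod_pow, inner_self_eq_norm_sq_to_K] using inner_tprod x x
  exact (pow_left_inj₀ (norm_nonneg _) (prod_nonneg fun j _ => norm_nonneg _) two_ne_zero).mp
    (by exact_mod_cast h)

lemma exists_tprod_eq_of_norm_eq_one {x : ∀ j, EuclideanSpace ℂ (κ j)} (hx : ‖tprod x‖ = 1) :
    ∃ y : ∀ j, EuclideanSpace ℂ (κ j), tprod y = tprod x ∧ ∀ j, ‖y j‖ = 1 := by
  rw [norm_tprod] at hx
  have hne (j : N) : ‖x j‖ ≠ 0 := fun h => by
    simp [prod_eq_zero (f := fun j => ‖x j‖) (mem_univ j) h] at hx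
  refine ⟨fun j => ((‖x j‖⁻¹ : ℝ) : ℂ) • x j, ?_, fun j => ?_⟩
  · rw [tprod_smul, ← Complex.ofReal_prod, prod_inv_distrib, hx]
    simp
  · rw [norm_smul, Complex.norm_real, Real.norm_eq_abs, abs_inv, abs_norm, inv_mul_cancel₀ (hne j)]

variable {ι : Type*} [Fintype ι]

lemma sum_prod_sum_norm_inner_sq (b : OrthonormalBasis ι ℂ (EuclideanSpace ℂ (∀ j, κ j)))
    (x : ι → ∀ j, EuclideanSpace ℂ (κ j)) (hb : ∀ i, b i = tprod (x i))
    (F : ∀ j, κ j → EuclideanSpace ℂ (κ j)) :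
    ∑ i, ∏ j, ∑ k, ‖⟪x i j, F j k⟫_ℂ‖ ^ 2 = ∏ j, ∑ k, ‖F j k‖ ^ 2 := by
  calc ∑ i, ∏ j, ∑ k, ‖⟪x i j, F j k⟫_ℂ‖ ^ 2
      = ∑ i, ∑ c : ∀ j, κ j, ‖⟪b i, tprod fun j => F j (c j)⟫_ℂ‖ ^ 2 := by
        simp only [Fintype.prod_sum, hb, inner_tprod, norm_prod, prod_pow]
    _ = ∑ c : ∀ j, κ j, ‖tprod fun j => F j (c j)‖ ^ 2 := by
        rw [sum_comm]
        simp only [b.sum_sq_norm_inner_right]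
    _ = ∏ j, ∑ k, ‖F j k‖ ^ 2 := by
        simp only [norm_tprod, ← prod_pow, Fintype.prod_sum]

lemma card_mul_sum_norm_inner_sq (b : OrthonormalBasis ι ℂ (EuclideanSpace ℂ (∀ j, κ j)))
    (x : ι → ∀ j, EuclideanSpace ℂ (κ j)) (hb : ∀ i, b i = tprod (x i))
    (hx : ∀ i j, ‖x i j‖ = 1) (j : N) (u : EuclideanSpace ℂ (κ j)) :
    Fintype.card (κ j) * ∑ i, ‖⟪x i j, u⟫_ℂ‖ ^ 2 = Fintype.card (∀ j, κ j) * ‖u‖ ^ 2 := by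
  set F := Function.update (fun j' k => EuclideanSpace.basisFun (κ j') ℂ k) j fun _ => u
  have hF (f : ∀ j', (κ j' → EuclideanSpace ℂ (κ j')) → ℝ) :
      ∏ j', f j' (F j') =
        f j (fun _ => u) * ∏ j' ∈ univ \ {j}, f j' (EuclideanSpace.basisFun _ ℂ) := by
    simp only [F, Function.apply_update f, prod_update_of_mem (mem_univ j)]
  have hfactor (i : ι) :
      ∏ j', ∑ k, ‖⟪x i j', F j' k⟫_ℂ‖ ^ 2 = Fintype.card (κ j) * ‖⟪x i j, u⟫_ℂ‖ ^ 2 := by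
    rw [hF fun j' G => ∑ k, ‖⟪x i j', G k⟫_ℂ‖ ^ 2]
    simp [OrthonormalBasis.sum_sq_norm_inner_left, hx]
  calc Fintype.card (κ j) * ∑ i, ‖⟪x i j, u⟫_ℂ‖ ^ 2
      = ∑ i, ∏ j', ∑ k, ‖⟪x i j', F j' k⟫_ℂ‖ ^ 2 := by simp only [hfactor, mul_sum]
    _ = ∏ j', ∑ k, ‖F j' k‖ ^ 2 := sum_prod_sum_norm_inner_sq b x hb F
    _ = Fintype.card (κ j) * ‖u‖ ^ 2 * ∏ j' ∈ univ \ {j}, (Fintype.card (κ j') : ℝ) := by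
        rw [hF fun j' G => ∑ k, ‖G k‖ ^ 2]
        simp
    _ = Fintype.card (∀ j, κ j) * ‖u‖ ^ 2 := by
        rw [Fintype.card_pi, Nat.cast_prod, prod_eq_mul_prod_sdiff_singleton_of_mem (mem_univ j)]
        ring

lemma span_range_factor_eq_top [Nonempty ι]
    (b : OrthonormalBasis ι ℂ (EuclideanSpace ℂ (∀ j, κ j))) (x : ι → ∀ j, EuclideanSpace ℂ (κ j))
    (hb : ∀ i, b i = tprod (x i)) (hx : ∀ i j, ‖x i j‖ = 1) (j : N) :
    span ℂ (Set.range fun i => x i j) = ⊤ := by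
  refine orthogonal_eq_bot_iff.1 (eq_bot_iff.2 fun u hu => ?_)
  have hframe := card_mul_sum_norm_inner_sq b x hb hx j u
  simp only [(mem_orthogonal _ u).1 hu _ (subset_span ⟨_, rfl⟩), norm_zero, zero_pow two_ne_zero,
    sum_const_zero, mul_zero, zero_eq_mul, ← card_eq_card_of_orthonormalBasis b, Nat.cast_eq_zero,
    Fintype.card_ne_zero, false_or, pow_eq_zero_iff two_ne_zero, norm_eq_zero] at hframe
  exact (mem_bot ℂ).2 hframe

lemma norm_inner_factor_sq_eq {b b' : OrthonormalBasis ι ℂ (EuclideanSpace ℂ (∀ j, κ j))}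
    {x x' : ι → ∀ j, EuclideanSpace ℂ (κ j)} (hb : ∀ i, b i = tprod (x i))
    (hb' : ∀ i, b' i = tprod (x' i)) (hx : ∀ i j, ‖x i j‖ = 1) (hx' : ∀ i j, ‖x' i j‖ = 1)
    (hunb : ∀ i i', ‖⟪b i, b' i'⟫_ℂ‖ ^ 2 = (Fintype.card (∀ j, κ j) : ℝ)⁻¹)
    (i i' : ι) (j : N) : ‖⟪x i j, x' i' j⟫_ℂ‖ ^ 2 = (Fintype.card (κ j) : ℝ)⁻¹ := by
  set g : ι → N → ℝ := fun i' j => Fintype.card (κ j) * ‖⟪x i j, x' i' j⟫_ℂ‖ ^ 2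
  have hprod (i' : ι) : ∏ j, g i' j = 1 := by
    have hD : (Fintype.card (∀ j, κ j) : ℝ) ≠ 0 := by
      rw [← card_eq_card_of_orthonormalBasis b]
      exact Nat.cast_ne_zero.2 (Fintype.card_pos_iff.2 ⟨i⟩).ne'
    simp only [g, prod_mul_distrib, ← Nat.cast_prod, ← Fintype.card_pi, prod_pow, ← norm_prod,
      ← inner_tprod, ← hb, ← hb', hunb, mul_inv_cancel₀ hD]
  have hpos (i' : ι) (j : N) : 0 < g i' j := by
    refine lt_of_le_of_ne (by positivity) fun h => ?_
    simpa [prod_eq_zero (mem_univ j) h.symm] using hprod i'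
  have hsum (j : N) : ∑ i', g i' j = Fintype.card ι := by
    simp only [g, ← mul_sum, norm_inner_symm (x i j)]
    rw [card_mul_sum_norm_inner_sq b' x' hb' hx', hx, one_pow, mul_one,
      card_eq_card_of_orthonormalBasis b']
  exact eq_inv_of_mul_eq_one_right (Real.eq_one_of_prod_eq_one_of_sum_eq_card hpos hprod hsum i' j)

theorem card_le_card_factor_add_one [Nonempty ι] {α : Type*} [Fintype α]
    (b : α → OrthonormalBasis ι ℂ (EuclideanSpace ℂ (∀ j, κ j)))
    (hprod : ∀ a i, ∃ x, b a i = tprod x)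
    (hunb : ∀ a a', a ≠ a' → ∀ i i',
      ‖⟪b a i, b a' i'⟫_ℂ‖ ^ 2 = (Fintype.card (∀ j, κ j) : ℝ)⁻¹)
    (j : N) (hj : 1 < Fintype.card (κ j)) : Fintype.card α ≤ Fintype.card (κ j) + 1 := by
  classical
  have hfactor (a : α) (i : ι) :
      ∃ x : ∀ j, EuclideanSpace ℂ (κ j), b a i = tprod x ∧ ∀ j, ‖x j‖ = 1 := by
    obtain ⟨x, hx⟩ := hprod a i
    obtain ⟨y, hy, hy1⟩ := exists_tprod_eq_of_norm_eq_one (hx ▸ (b a).norm_eq_one i)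
    exact ⟨y, hx.trans hy.symm, hy1⟩
  choose x hb hx using hfactor
  exact card_le_card_add_one_of_unbiased hj (fun a i => x a i j) (fun a i => hx a i j)
    (fun a => span_range_factor_eq_top (b a) (x a) (hb a) (hx a) j)
    fun a a' h i i' => norm_inner_factor_sq_eq (hb a) (hb a') (hx a) (hx a') (hunb a a' h) i i' j

end ProductVector

lemma inner_toLp_eq_sum_star_mul {I : Type*} [Fintype I] (v w : I → ℂ) :
    ⟪WithLp.toLp 2 v, WithLp.toLp 2 w⟫_ℂ = ∑ a, star (v a) * w a := by
  simp [PiLp.inner_apply, mul_comm]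

lemma exists_orthonormalBasis_toLp {ι I : Type*} [Fintype ι] [DecidableEq ι] [Fintype I]
    (v : ι → I → ℂ) (hcard : Fintype.card ι = Fintype.card I)
    (horth : ∀ i i', ∑ a, star (v i a) * v i' a = if i = i' then 1 else 0) :
    ∃ b : OrthonormalBasis ι ℂ (EuclideanSpace ℂ I), ∀ i, b i = WithLp.toLp 2 (v i) := by
  have hon : Orthonormal ℂ fun i => WithLp.toLp 2 (v i) :=
    orthonormal_iff_ite.2 fun i i' => by rw [inner_toLp_eq_sum_star_mul, horth]
  refine ⟨OrthonormalBasis.mk hon (hon.linearIndependent.span_eq_top_of_card_eq_finrank' ?_).ge,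
    fun i => ?_⟩
  · rw [finrank_euclideanSpace, hcard]
  · rw [OrthonormalBasis.coe_mk]

theorem mub_product_bases_bound_multipartite (n : ℕ) (hn : 0 < n) (d : Fin n → ℕ)
    (hd : ∀ j, 2 ≤ d j) (t : ℕ)
    (Ψ : Fin t → Fin (∏ j, d j) → ((j : Fin n) → Fin (d j)) → ℂ)
    (horth : ∀ j, ∀ i i' : Fin (∏ j, d j),
      (∑ a, star (Ψ j i a) * Ψ j i' a) = if i = i' then 1 else 0)
    (hmub : ∀ j j', j ≠ j' → ∀ i i' : Fin (∏ j, d j),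
      ‖∑ a, star (Ψ j i a) * Ψ j' i' a‖ = 1 / Real.sqrt (∏ j, d j))
    (hprod : ∀ j i, IsProductVectorMulti (Ψ j i)) :
    t ≤ Finset.univ.inf' (Finset.univ_nonempty_iff.mpr (Fin.pos_iff_nonempty.mp hn)) d + 1 := by
  obtain ⟨j₀, -, hj₀⟩ := exists_mem_eq_inf' (univ_nonempty_iff.mpr (Fin.pos_iff_nonempty.mp hn)) d
  have hcard : Fintype.card (∀ j, Fin (d j)) = ∏ j, d j := by simp [Fintype.card_pi]
  have : Nonempty (Fin (∏ j, d j)) := ⟨⟨0, prod_pos fun j _ => by linarith [hd j]⟩⟩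
  choose b hb using fun a =>
    exists_orthonormalBasis_toLp (Ψ a) (by rw [Fintype.card_fin, hcard]) (horth a)
  rw [hj₀]
  simpa using ProductVector.card_le_card_factor_add_one b
    (fun a i => hb a i ▸ ProductVector.exists_tprod_eq_of_isProductVectorMulti (hprod a i))
    (fun a a' h i i' => by
      rw [hb, hb, inner_toLp_eq_sum_star_mul, hmub a a' h, hcard, div_pow, one_pow,
        Real.sq_sqrt (by positivity), one_div]
      push_cast
      rfl)
    j₀ (by rw [Fintype.card_fin]; exact hd j₀)
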